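/- Suppose (U^n) solves the explicit upwind scheme and the CFL condition holds with bounds L⁺, L⁻. Assume that for every n ∈ ℕ the sequence j ↦ |U^n_{j+1} − U^n_j| is summable over ℤ. Then the scheme is total-variation diminishing: for every n ∈ ℕ, TV[U^n] = Σ_{j∈ℤ} |U^n_{j+1} − U^n_j| ≤ Σ_{j∈ℤ} |U^0_{j+1} − U^0_j| = TV[U^0]. -/

import Mathlib

/-
Writing `f⁺(y) - f⁺(x) = a (y - x)` and `f⁻(y) - f⁻(x) = b (y - x)` by the mean value
theorem puts the scheme in Harten's incremental form: `U^{n+1}_{j+1} - U^{n+1}_j` is a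
combination of the differences `U^k_{j+1} - U^k_j` (`k < n`) with weights `c^{n+1}_k`, and of the
three neighbouring differences at time `n` with weights `δ a_{j-1}`, `-δ b_{j+1}` and
`c^{n+1}_n - δ a_j + δ b_j`. The monotonicity of `f^±` makes the first two nonnegative, and the
CFL condition makes the central one nonnegative because `c^{n+1}_n ≥ 2 - 2^{1-α}`. Summing
absolute values over `j`, the shifted weights recombine and give
`TV[U^{n+1}] ≤ ∑_k c^{n+1}_k TV[U^k]`. The `c^{n+1}_k` are nonnegative (concavity of
`t ↦ t^{1-α}`) and telescope to `1`, so `TV[U^n] ≤ TV[U^0]` follows by strong induction.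
-/

open scoped BigOperators

/-- The L1 coefficients `c^{n+1}_k` for the discrete Caputo derivative:
`c^{n+1}_0 = (n+1)^{1-α} - n^{1-α}` and, for `1 ≤ k ≤ n`,
`c^{n+1}_k = 2(n+1-k)^{1-α} - (n+2-k)^{1-α} - (n-k)^{1-α}`. -/
noncomputable def caputoCoeff (α : ℝ) (n k : ℕ) : ℝ :=
  if k = 0 then ((n : ℝ) + 1) ^ (1 - α) - (n : ℝ) ^ (1 - α)
  else 2 * ((n : ℝ) + 1 - (k : ℝ)) ^ (1 - α) - ((n : ℝ) + 2 - (k : ℝ)) ^ (1 - α)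
    - ((n : ℝ) - (k : ℝ)) ^ (1 - α)

/-- `U` solves the explicit upwind scheme with time steps indexed by `ℕ`
and space indexed by `ℤ`. -/
def SolvesExplicitScheme (α δ : ℝ) (fp fm : ℝ → ℝ) (U : ℕ → ℤ → ℝ) : Prop :=
  ∀ (n : ℕ) (j : ℤ),
    U (n + 1) j = (∑ k ∈ Finset.range (n + 1), caputoCoeff α n k * U k j)
      - δ * (fp (U n j) - fp (U n (j - 1)))
      - δ * (fm (U n (j + 1)) - fm (U n j))

/-- The CFL condition with bounds `Lp, Lm`:
`(f⁺)' ≤ Lp`, `(f⁻)' ≥ -Lm` and `δ (Lp + Lm) ≤ 2 - 2^{1-α}`. -/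
def CFLCondition (α δ Lp Lm : ℝ) (fp fm : ℝ → ℝ) : Prop :=
  0 ≤ Lp ∧ 0 ≤ Lm ∧ (∀ x, deriv fp x ≤ Lp) ∧ (∀ x, -Lm ≤ deriv fm x) ∧
    δ * (Lp + Lm) ≤ 2 - (2 : ℝ) ^ (1 - α)

open Finset

section caputoCoeff

variable {α : ℝ}

lemma caputoCoeff_nonneg (hα0 : 0 ≤ α) (hα1 : α ≤ 1) {n k : ℕ} (hk : k ≤ n) :
    0 ≤ caputoCoeff α n k := by
  rcases Nat.eq_zero_or_pos k with rfl | hk0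
  · rw [caputoCoeff, if_pos rfl, sub_nonneg]
    exact Real.rpow_le_rpow n.cast_nonneg (by linarith) (by linarith)
  · rw [caputoCoeff, if_neg hk0.ne']
    set x : ℝ := (n : ℝ) + 1 - k
    have hx : 1 ≤ x := by simp only [x]; linarith [(Nat.cast_le (α := ℝ)).2 hk]
    have hconc := (Real.concaveOn_rpow (p := 1 - α) (by linarith) (by linarith)).2
      (Set.mem_Ici.2 (by linarith : (0 : ℝ) ≤ x - 1))
      (Set.mem_Ici.2 (by linarith : (0 : ℝ) ≤ x + 1))
      (by norm_num : (0 : ℝ) ≤ 1 / 2) (by norm_num : (0 : ℝ) ≤ 1 / 2) (by norm_num)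
    simp only [smul_eq_mul] at hconc
    rw [show 1 / 2 * (x - 1) + 1 / 2 * (x + 1) = x by ring] at hconc
    rw [show (n : ℝ) + 2 - k = x + 1 by ring, show (n : ℝ) - k = x - 1 by ring]
    linarith

lemma sum_caputoCoeff (hα1 : α < 1) (n : ℕ) :
    ∑ k ∈ range (n + 1), caputoCoeff α n k = 1 := by
  have hp : 1 - α ≠ 0 := by linarith
  set B : ℕ → ℝ := fun k => ((n : ℝ) + 1 - k) ^ (1 - α) - ((n : ℝ) - k) ^ (1 - α)
  have hstep : ∀ i ∈ range n, caputoCoeff α n (i + 1) = B (i + 1) - B i := by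
    intro i _
    simp only [caputoCoeff, B, Nat.succ_ne_zero, if_false]
    push_cast
    ring_nf
  rw [sum_range_succ', sum_congr rfl hstep, sum_range_sub]
  simp only [caputoCoeff, B, if_pos, Nat.cast_zero, sub_zero, sub_self, add_sub_cancel_left,
    Real.one_rpow, Real.zero_rpow hp]
  ring

lemma two_sub_two_rpow_le_caputoCoeff_self (hα1 : α < 1) (n : ℕ) :
    2 - (2 : ℝ) ^ (1 - α) ≤ caputoCoeff α n n := by
  have hp : 1 - α ≠ 0 := by linarith
  have h2p : 1 ≤ (2 : ℝ) ^ (1 - α) := Real.one_le_rpow one_le_two (by linarith)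
  cases n with
  | zero =>
    simp only [caputoCoeff, if_pos, Nat.cast_zero, zero_add, Real.one_rpow, Real.zero_rpow hp]
    linarith
  | succ m =>
    simp only [caputoCoeff, Nat.succ_ne_zero, if_false]
    push_cast
    rw [show (m : ℝ) + 1 + 1 - (m + 1) = 1 by ring, show (m : ℝ) + 1 + 2 - (m + 1) = 2 by ring,
      sub_self, Real.one_rpow, Real.zero_rpow hp]
    linarith

end caputoCoeff

lemma exists_sub_eq_deriv_mul_sub {F : ℝ → ℝ} (hF : Differentiable ℝ F) (x y : ℝ) :
    ∃ c, F y - F x = deriv F c * (y - x) := by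
  wlog hxy : x < y generalizing x y
  · rcases (not_lt.1 hxy).eq_or_lt with rfl | hyx
    · exact ⟨y, by ring⟩
    · obtain ⟨c, hc⟩ := this y x hyx
      exact ⟨c, by linarith⟩
  obtain ⟨c, -, hc⟩ := exists_deriv_eq_slope F hxy hF.continuous.continuousOn
    hF.differentiableOn
  exact ⟨c, by rw [hc, div_mul_cancel₀ _ (sub_ne_zero.2 hxy.ne')]⟩

/-- The shifted sums `∑ A (j - 1) |D (j - 1)|` and `∑ B (j + 1) |D (j + 1)|` cancel the
`- A j - B j` in the central weight. -/
lemma hasSum_upwind_bound {c : ℝ} {A B D : ℤ → ℝ} (hA : ∀ j, 0 ≤ A j) (hB : ∀ j, 0 ≤ B j)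
    (hAB : ∀ j, A j + B j ≤ c) (hD : Summable fun j => |D j|) :
    HasSum (fun j => (c - A j - B j) * |D j| + A (j - 1) * |D (j - 1)| + B (j + 1) * |D (j + 1)|)
      (c * ∑' j, |D j|) := by
  have hP : Summable fun j => A j * |D j| :=
    .of_nonneg_of_le (fun j => mul_nonneg (hA j) (abs_nonneg _))
      (fun j => by gcongr; linarith [hB j, hAB j]) (hD.mul_left c)
  have hQ : Summable fun j => B j * |D j| :=
    .of_nonneg_of_le (fun j => mul_nonneg (hB j) (abs_nonneg _))
      (fun j => by gcongr; linarith [hA j, hAB j]) (hD.mul_left c)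
  have hP' := (Equiv.subRight (1 : ℤ)).hasSum_iff.2 hP.hasSum
  have hQ' := (Equiv.addRight (1 : ℤ)).hasSum_iff.2 hQ.hasSum
  have h := ((((hD.hasSum.mul_left c).sub hP.hasSum).sub hQ.hasSum).add hP').add hQ'
  rw [show ∀ x y z : ℝ, x - y - z + y + z = x by intros; ring] at h
  refine h.congr_fun fun j => ?_
  simp only [Function.comp_apply, Equiv.subRight_apply, Equiv.coe_addRight]
  ring

lemma abs_upwind_le {c : ℝ} {A B D : ℤ → ℝ} (hA : ∀ j, 0 ≤ A j) (hB : ∀ j, 0 ≤ B j)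
    (hAB : ∀ j, A j + B j ≤ c) (j : ℤ) :
    |(c - A j - B j) * D j + A (j - 1) * D (j - 1) + B (j + 1) * D (j + 1)|
      ≤ (c - A j - B j) * |D j| + A (j - 1) * |D (j - 1)| + B (j + 1) * |D (j + 1)| := by
  have hc : 0 ≤ c - A j - B j := by linarith [hAB j]
  calc _ ≤ |(c - A j - B j) * D j| + |A (j - 1) * D (j - 1)| + |B (j + 1) * D (j + 1)| :=
        abs_add_three _ _ _
    _ = _ := by rw [abs_mul, abs_mul, abs_mul, abs_of_nonneg hc, abs_of_nonneg (hA _),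
        abs_of_nonneg (hB _)]

lemma apply_le_apply_zero_of_succ_le_weighted_sum {T : ℕ → ℝ} {w : ℕ → ℕ → ℝ}
    (hw : ∀ n k, k ≤ n → 0 ≤ w n k) (hw1 : ∀ n, ∑ k ∈ range (n + 1), w n k = 1)
    (hT : ∀ n, T (n + 1) ≤ ∑ k ∈ range (n + 1), w n k * T k) (n : ℕ) : T n ≤ T 0 := by
  induction n using Nat.strong_induction_on with
  | _ n ih =>
    cases n with
    | zero => rfl
    | succ m =>
      calc T (m + 1) ≤ ∑ k ∈ range (m + 1), w m k * T k := hT m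
        _ ≤ ∑ k ∈ range (m + 1), w m k * T 0 := by
          gcongr with k hk
          · exact hw m k (Nat.lt_succ_iff.1 (mem_range.1 hk))
          · exact ih k (mem_range.1 hk)
        _ = T 0 := by rw [← sum_mul, hw1, one_mul]

noncomputable def totalVariation (u : ℤ → ℝ) : ℝ := ∑' j, |u (j + 1) - u j|

namespace SolvesExplicitScheme

variable {α δ : ℝ} {fp fm : ℝ → ℝ} {U : ℕ → ℤ → ℝ}

lemma incremental_form (hU : SolvesExplicitScheme α δ fp fm U) {a b : ℝ → ℝ → ℝ}
    (ha : ∀ x y, fp y - fp x = a x y * (y - x)) (hb : ∀ x y, fm y - fm x = b x y * (y - x))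
    (n : ℕ) (j : ℤ) :
    let D := fun k j => U k (j + 1) - U k j
    let A := fun j => δ * a (U n j) (U n (j + 1))
    let B := fun j => -(δ * b (U n j) (U n (j + 1)))
    D (n + 1) j = ∑ k ∈ range n, caputoCoeff α n k * D k j
      + ((caputoCoeff α n n - A j - B j) * D n j + A (j - 1) * D n (j - 1)
        + B (j + 1) * D n (j + 1)) := by
  intro D A B
  have hj := hU n j
  have hj1 := hU n (j + 1)
  simp only [D, A, B, sub_add_cancel, add_sub_cancel_right] at hj1 ⊢
  rw [hj, hj1, ha (U n (j - 1)), ha (U n j), hb (U n j), hb (U n (j + 1)), sum_range_succ,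
    sum_range_succ]
  simp only [mul_sub, sum_sub_distrib]
  ring

lemma totalVariation_succ_le (hU : SolvesExplicitScheme α δ fp fm U) (hα0 : 0 ≤ α)
    (hα1 : α < 1) (hδ : 0 ≤ δ) {Lp Lm : ℝ} (hfp : Differentiable ℝ fp)
    (hfm : Differentiable ℝ fm) (hfp' : ∀ x, deriv fp x ∈ Set.Icc 0 Lp)
    (hfm' : ∀ x, deriv fm x ∈ Set.Icc (-Lm) 0) (hcfl : δ * (Lp + Lm) ≤ 2 - (2 : ℝ) ^ (1 - α))
    (hsum : ∀ k, Summable fun j => |U k (j + 1) - U k j|) (n : ℕ) :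
    totalVariation (U (n + 1)) ≤
      ∑ k ∈ range (n + 1), caputoCoeff α n k * totalVariation (U k) := by
  choose ξ hξ using exists_sub_eq_deriv_mul_sub hfp
  choose η hη using exists_sub_eq_deriv_mul_sub hfm
  set A : ℤ → ℝ := fun j => δ * deriv fp (ξ (U n j) (U n (j + 1)))
  set B : ℤ → ℝ := fun j => -(δ * deriv fm (η (U n j) (U n (j + 1))))
  have hA : ∀ j, 0 ≤ A j := fun j => mul_nonneg hδ (hfp' _).1
  have hB : ∀ j, 0 ≤ B j := fun j => neg_nonneg.2 (mul_nonpos_of_nonneg_of_nonpos hδ (hfm' _).2)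
  have hAB : ∀ j, A j + B j ≤ caputoCoeff α n n := fun j => by
    have hAj : A j ≤ δ * Lp := mul_le_mul_of_nonneg_left (hfp' _).2 hδ
    have hBj : -(δ * Lm) ≤ -B j := by simpa [B] using mul_le_mul_of_nonneg_left (hfm' _).1 hδ
    linarith [two_sub_two_rpow_le_caputoCoeff_self hα1 n]
  have hbound : ∀ j, |U (n + 1) (j + 1) - U (n + 1) j| ≤
      ∑ k ∈ range n, caputoCoeff α n k * |U k (j + 1) - U k j|
        + ((caputoCoeff α n n - A j - B j) * |U n (j + 1) - U n j|
          + A (j - 1) * |U n (j - 1 + 1) - U n (j - 1)|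
          + B (j + 1) * |U n (j + 1 + 1) - U n (j + 1)|) := by
    intro j
    have h := hU.incremental_form hξ hη n j
    dsimp only at h
    rw [h]
    refine (abs_add_le _ _).trans (add_le_add ?_
      (abs_upwind_le (D := fun j => U n (j + 1) - U n j) hA hB hAB j))
    refine (abs_sum_le_sum_abs _ _).trans_eq (sum_congr rfl fun k hk => ?_)
    rw [abs_mul, abs_of_nonneg (caputoCoeff_nonneg hα0 hα1.le (mem_range.1 hk).le)]
  have hhistory : HasSum (fun j => ∑ k ∈ range n, caputoCoeff α n k * |U k (j + 1) - U k j|)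
      (∑ k ∈ range n, caputoCoeff α n k * totalVariation (U k)) :=
    hasSum_sum fun k _ => (hsum k).hasSum.mul_left _
  rw [sum_range_succ]
  exact hasSum_le hbound (hsum (n + 1)).hasSum
    (hhistory.add (hasSum_upwind_bound (D := fun j => U n (j + 1) - U n j) hA hB hAB (hsum n)))

end SolvesExplicitScheme

/-- the explicit upwind scheme is TVD under the CFL condition:
`TV[U^n] ≤ TV[U^0]` for every `n`. -/
theorem explicit_upwind_tvd (α τ h : ℝ) (hα : α ∈ Set.Ioo (0 : ℝ) 1)
    (hτ : 0 < τ) (hh : 0 < h) (δ : ℝ) (hδ : δ = τ ^ α / (h * Real.Gamma (2 - α)))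
    (fp fm : ℝ → ℝ) (hfp : Differentiable ℝ fp) (hfm : Differentiable ℝ fm)
    (hfp' : ∀ x, 0 ≤ deriv fp x) (hfm' : ∀ x, deriv fm x ≤ 0)
    (U : ℕ → ℤ → ℝ) (hU : SolvesExplicitScheme α δ fp fm U)
    (Lp Lm : ℝ) (hcfl : CFLCondition α δ Lp Lm fp fm)
    (hsum : ∀ n : ℕ, Summable (fun j : ℤ => |U n (j + 1) - U n j|)) :
    ∀ n : ℕ, ∑' j : ℤ, |U n (j + 1) - U n j| ≤ ∑' j : ℤ, |U 0 (j + 1) - U 0 j| := by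
  obtain ⟨hα0, hα1⟩ := hα
  obtain ⟨-, -, hfpL, hfmL, hδL⟩ := hcfl
  have hδ0 : 0 ≤ δ := hδ ▸ div_nonneg (Real.rpow_nonneg hτ.le α)
    (mul_nonneg hh.le (Real.Gamma_pos_of_pos (by linarith)).le)
  exact apply_le_apply_zero_of_succ_le_weighted_sum (T := fun n => totalVariation (U n))
    (fun n k hk => caputoCoeff_nonneg hα0.le hα1.le hk) (sum_caputoCoeff hα1)
    (hU.totalVariation_succ_le hα0.le hα1 hδ0 hfp hfm (fun x => ⟨hfp' x, hfpL x⟩)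
      (fun x => ⟨hfmL x, hfm' x⟩) hδL hsum)
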